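/- arXiv:1005.2472 — 3 statements merged into one kernel-verified Lean document; each statement's English description precedes it below -/
import Mathlib

section
/- Let p be a prime, G a finite group, and S ≤ G a subgroup whose index is coprime to p. If c_1, …, c_n ∈ H^*(G; F_p) is a sequence of homogeneous elements whose restrictions to H^*(S; F_p) form a filter-regular sequence, then c_1, …, c_n is a filter-regular sequence in H^*(G; F_p). -/
/-!
Restriction followed by transfer is the identity, so `RG → RS` is split injective as a map of
`RG`-modules and every ideal `I` of `RG` is contracted from its extension:
`res x ∈ I · RS` forces `x ∈ I`. Hence if `c_i x` lies in `(c_j)_{j<i}`, then `res (c_i) res x`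
lies in `(res c_j)_{j<i}`; for `deg x` large, filter-regularity over `RS` puts `res x` in that
ideal, and contraction brings `x` back into `(c_j)_{j<i}`.
-/

/-- A sequence `c : Fin n → R` of homogeneous elements of a graded `k`-algebra `R` is
filter-regular if for each `i` the kernel of multiplication by `c i` on
`R/(c_1, …, c_{i-1})` vanishes in all sufficiently high degrees. -/
def IsFilterRegularSeq {k R : Type*} [Field k] [CommRing R] [Algebra k R]
    (𝒜 : ℕ → Submodule k R) {n : ℕ} (c : Fin n → R) : Prop :=
  ∀ i : Fin n, ∃ N : ℕ, ∀ d ≥ N, ∀ x ∈ 𝒜 d,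
    c i * x ∈ Ideal.span (c '' {j | j < i}) → x ∈ Ideal.span (c '' {j | j < i})

theorem Ideal.mem_of_algebraMap_mem_map_of_retraction {R S : Type*} [CommRing R] [CommRing S]
    [Algebra R S] (tr : S →ₗ[R] R) (htr : ∀ a : R, tr (algebraMap R S a) = a) {I : Ideal R}
    {x : R} (hx : algebraMap R S x ∈ I.map (algebraMap R S)) : x ∈ I := by
  have hmem : tr (algebraMap R S x) ∈ (I • ⊤ : Submodule R S).map tr :=
    Submodule.mem_map_of_mem (by rwa [Ideal.smul_top_eq_map])
  rw [Submodule.map_smul'', htr] at hmem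
  simpa only [smul_eq_mul, Ideal.mul_top] using Submodule.smul_mono le_rfl le_top hmem

theorem IsFilterRegularSeq.of_algebraMap {k R S : Type*} [Field k] [CommRing R] [CommRing S]
    [Algebra k R] [Algebra k S] [Algebra R S]
    {𝒜 : ℕ → Submodule k R} {ℬ : ℕ → Submodule k S}
    (hres : ∀ d, ∀ x ∈ 𝒜 d, algebraMap R S x ∈ ℬ d)
    (tr : S →ₗ[R] R) (htr : ∀ a : R, tr (algebraMap R S a) = a)
    {n : ℕ} {c : Fin n → R} (hreg : IsFilterRegularSeq ℬ (fun i => algebraMap R S (c i))) :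
    IsFilterRegularSeq 𝒜 c := by
  intro i
  obtain ⟨N, hN⟩ := hreg i
  have hspan : Ideal.span ((fun j => algebraMap R S (c j)) '' {j | j < i}) =
      (Ideal.span (c '' {j | j < i})).map (algebraMap R S) := by
    rw [Ideal.map_span, Set.image_image]
  refine ⟨N, fun d hd x hx hcx => ?_⟩
  refine Ideal.mem_of_algebraMap_mem_map_of_retraction tr htr ?_
  rw [← hspan]
  refine hN d hd _ (hres d x hx) ?_
  rw [← map_mul, hspan]
  exact Ideal.mem_map_of_mem _ hcx

theorem isFilterRegularSeq_of_restriction_general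
    (p : ℕ) [Fact p.Prime]
    (RG RS : Type*) [CommRing RG] [CommRing RS]
    [Algebra (ZMod p) RG] [Algebra (ZMod p) RS]
    [Algebra RG RS]
    (𝒜 : ℕ → Submodule (ZMod p) RG) (ℬ : ℕ → Submodule (ZMod p) RS)
    (hres : ∀ d, ∀ x ∈ 𝒜 d, algebraMap RG RS x ∈ ℬ d)  -- restriction is graded
    -- transfer exhibits `RG` as a direct summand of `RS` as an `RG`-module:
    (tr : RS →ₗ[RG] RG) (htr : ∀ a : RG, tr (algebraMap RG RS a) = a)
    {n : ℕ} (c : Fin n → RG)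
    (hreg : IsFilterRegularSeq ℬ (fun i => algebraMap RG RS (c i))) :
    IsFilterRegularSeq 𝒜 c :=
  IsFilterRegularSeq.of_algebraMap hres tr htr hreg

/-- Lemma `lemma:fregSG` of the paper. Let `p` be a prime, `G` a finite
group, and `S ≤ G` a subgroup whose index is coprime to `p`. If `c_1, …, c_n ∈ H^*(G; F_p)`
is a sequence of homogeneous elements whose restrictions to `H^*(S; F_p)` form a
filter-regular sequence, then `c_1, …, c_n` is filter-regular in `H^*(G; F_p)`.

The cohomology rings are abstracted as graded `F_p`-algebras `RG = H^*(G; F_p)` and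
`RS = H^*(S; F_p)` with a grading-preserving restriction homomorphism `algebraMap RG RS`;
the key fact that the transfer map makes `RG` a direct summand of `RS` as an `RG`-module
(because `[G : S]` is coprime to `p`) is recorded by the splitting `tr`. -/
theorem isFilterRegularSeq_of_restriction
    (p : ℕ) [Fact p.Prime] (G : Type*) [Group G] [Finite G]
    (S : Subgroup G) (hS : Nat.Coprime S.index p)
    (RG RS : Type*) [CommRing RG] [CommRing RS]
    [Algebra (ZMod p) RG] [Algebra (ZMod p) RS]
    [Algebra RG RS] [IsScalarTower (ZMod p) RG RS]
    (𝒜 : ℕ → Submodule (ZMod p) RG) (ℬ : ℕ → Submodule (ZMod p) RS)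
    [GradedAlgebra 𝒜] [GradedAlgebra ℬ]
    (hres : ∀ d, ∀ x ∈ 𝒜 d, algebraMap RG RS x ∈ ℬ d)  -- restriction is graded
    -- transfer exhibits `RG` as a direct summand of `RS` as an `RG`-module:
    (tr : RS →ₗ[RG] RG) (htr : ∀ a : RG, tr (algebraMap RG RS a) = a)
    (hrgr : ∀ d, ∀ y ∈ ℬ d, tr y ∈ 𝒜 d)  -- the splitting is graded
    {n : ℕ} (c : Fin n → RG)
    (hhom : ∀ i, ∃ d, c i ∈ 𝒜 d)
    (hreg : IsFilterRegularSeq ℬ (fun i => algebraMap RG RS (c i))) :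
    IsFilterRegularSeq 𝒜 c :=
  isFilterRegularSeq_of_restriction_general p RG RS 𝒜 ℬ hres tr htr c hreg
end

section
/- Let k be a field and A ⊆ B an extension of commutative graded-connected k-algebras such that A is a direct summand of B as an A-module. If b_1, …, b_n ∈ A is a regular sequence on B, then it is a regular sequence on A. -/
/-!
Regularity of a sequence in a ring, viewed as a module over itself, is a condition on the ideals
generated by its initial segments. When `A → B` has an `A`-linear retraction `π`, every ideal `I`
of `A` is contracted from `B`: if `a ∈ I B` then `a = π a ∈ I π(B) ⊆ I`. So a failure of
regularity over `A` (a zero divisor modulo an initial segment, or the unit ideal) persists in `B`.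
-/

open Finset

/-- A sequence `b : Fin n → A` of elements of `A` is regular on an `A`-module `M` if each
`b i` is a nonzerodivisor on `M/(b_1, …, b_{i-1})M` and `(b_1, …, b_n)M ≠ M`. -/
def IsRegularSeqOn {A : Type*} [CommRing A] (M : Type*) [AddCommGroup M] [Module A M]
    {n : ℕ} (b : Fin n → A) : Prop :=
  (∀ i : Fin n, ∀ x : M,
      b i • x ∈ (Ideal.span (b '' {j | j < i})) • (⊤ : Submodule A M) →
        x ∈ (Ideal.span (b '' {j | j < i})) • (⊤ : Submodule A M)) ∧
  (Ideal.span (Set.range b)) • (⊤ : Submodule A M) ≠ ⊤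

open Set

theorem isRegularSeqOn_self_iff {R : Type*} [CommRing R] {n : ℕ} (b : Fin n → R) :
    IsRegularSeqOn R b ↔
      (∀ i x, b i * x ∈ Ideal.span (b '' {j | j < i}) → x ∈ Ideal.span (b '' {j | j < i})) ∧
        Ideal.span (range b) ≠ ⊤ := by
  simp only [IsRegularSeqOn, Ideal.mul_top, smul_eq_mul]

theorem IsRegularSeqOn.of_map {R S : Type*} [CommRing R] [CommRing S] (f : R →+* S)
    (hf : ∀ I : Ideal R, (I.map f).comap f ≤ I) {n : ℕ} {b : Fin n → R}
    (hb : IsRegularSeqOn S (f ∘ b)) : IsRegularSeqOn R b := by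
  rw [isRegularSeqOn_self_iff] at hb ⊢
  obtain ⟨hnzd, hne⟩ := hb
  have hspan (s : Set (Fin n)) : Ideal.span ((f ∘ b) '' s) = (Ideal.span (b '' s)).map f := by
    rw [Ideal.map_span, image_comp]
  refine ⟨fun i x hx => hf _ ?_, fun htop => hne ?_⟩
  · rw [Ideal.mem_comap, ← hspan]
    refine hnzd i (f x) ?_
    rw [hspan, Function.comp_apply, ← map_mul]
    exact Ideal.mem_map_of_mem f hx
  · rw [range_comp, ← Ideal.map_span, htop, Ideal.map_top]

theorem Ideal.comap_map_le_of_retraction {A B : Type*} [CommRing A] [CommRing B] [Algebra A B]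
    (π : B →ₗ[A] A) (hπ : ∀ a : A, π (algebraMap A B a) = a) (I : Ideal A) :
    (I.map (algebraMap A B)).comap (algebraMap A B) ≤ I := by
  intro a ha
  have hmem : algebraMap A B a ∈ I • (⊤ : Submodule A B) := by
    rwa [Ideal.smul_top_eq_map]
  have hπa := Submodule.mem_map_of_mem (f := π) hmem
  rw [Submodule.map_smul'', hπ] at hπa
  exact Submodule.smul_le.2 (fun r hr m _ => I.mul_mem_right m hr) hπa

theorem isRegularSeqOn_of_directSummand_general
    (A B : Type*) [CommRing A] [CommRing B]
    [Algebra A B]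
    -- `A` is a direct summand of `B` as an `A`-module
    (π : B →ₗ[A] A) (hπ : ∀ a : A, π (algebraMap A B a) = a)
    {n : ℕ} (b : Fin n → A)
    (hb : IsRegularSeqOn B (fun i => algebraMap A B (b i))) :
    IsRegularSeqOn A b :=
  hb.of_map (algebraMap A B) (Ideal.comap_map_le_of_retraction π hπ)

/-- Let `k` be a field and `A ⊆ B` an extension of commutative
graded-connected `k`-algebras such that `A` is a direct summand of `B` as an `A`-module.
If `b_1, …, b_n ∈ A` is a regular sequence on `B`, then it is a regular sequence on `A`. -/
theorem isRegularSeqOn_of_directSummand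
    (k : Type*) [Field k] (A B : Type*) [CommRing A] [CommRing B]
    [Algebra k A] [Algebra k B] [Algebra A B] [IsScalarTower k A B]
    (hinj : Function.Injective (algebraMap A B))
    -- gradings with finite-dimensional pieces, connected: `A₀ = B₀ = k`
    (𝒜 : ℕ → Submodule k A) (ℬ : ℕ → Submodule k B)
    [GradedAlgebra 𝒜] [GradedAlgebra ℬ]
    [∀ i, Module.Finite k (𝒜 i)] [∀ i, Module.Finite k (ℬ i)]
    (hA0 : ∀ x ∈ 𝒜 0, ∃ c : k, x = algebraMap k A c)
    (hB0 : ∀ x ∈ ℬ 0, ∃ c : k, x = algebraMap k B c)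
    (hgr : ∀ i, ∀ x ∈ 𝒜 i, algebraMap A B x ∈ ℬ i)  -- the inclusion is graded
    -- `A` is a direct summand of `B` as an `A`-module
    (π : B →ₗ[A] A) (hπ : ∀ a : A, π (algebraMap A B a) = a)
    {n : ℕ} (b : Fin n → A)
    (hb : IsRegularSeqOn B (fun i => algebraMap A B (b i))) :
    IsRegularSeqOn A b :=
  isRegularSeqOn_of_directSummand_general A B π hπ b hb
end

section
/- Let G be a finite group, S a Sylow p-subgroup, and G_0 = S ≤ G_1 ≤ … ≤ G_n = G a tower of subgroups. Then for each i, G_{i-1} contains a Sylow p-subgroup of G_i (namely S), and an element x ∈ H^*(S; F_p) lies in the image of res^G_S if and only if, setting R_0 = H^*(S; F_p) and R_i = image of res^{G_i}_S, one has x ∈ R_n, where each R_i is the set of elements of R_{i-1} stable with respect to all (G_{i-1}, G_{i-1})-double cosets in G_i. -/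
/-! Restriction from `G_{i+1}` to `S` factors through `G_i`, and restriction to `S` is
injective on `H^*(G_i; F_p)` since `[G_i : S]` divides `[G : S]`, which is prime to `p`.
Hence a class comes from `G_{i+1}` iff it comes from `G_i` and its unique preimage there is
`G_{i+1}`-stable, which by the one-step stable elements theorem applied to
`G_i ≤ G_{i+1}` is exactly the recursion defining `R_{i+1}`. -/

variable {G : Type*} [Group G]

/-- `gKg⁻¹`. -/
def conjSub (g : G) (K : Subgroup G) : Subgroup G :=
  K.map (MulAut.conj g).toMonoidHom

/-- `H^g ∩ H := g⁻¹Hg ⊓ H`. -/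
def interSub (g : G) (H : Subgroup G) : Subgroup G :=
  conjSub g⁻¹ H ⊓ H

/-- The conjugation homomorphism `c_g : H^g ∩ H → H ∩ gHg⁻¹ ≤ H`, `h ↦ ghg⁻¹`. -/
def conjHom (g : G) (H : Subgroup G) : interSub g H →* H where
  toFun x := ⟨g * (x : G) * g⁻¹, by
    obtain ⟨hx, -⟩ := x.2
    obtain ⟨h, hh, he⟩ := hx
    have : (x : G) = g⁻¹ * h * g⁻¹⁻¹ := he.symm
    rw [this]
    simpa [mul_assoc] using hh⟩
  map_one' := by ext; simp
  map_mul' x y := by ext; simp [mul_assoc]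

lemma interSub_le (g : G) (H : Subgroup G) : interSub g H ≤ H := inf_le_right

section

variable (p : ℕ) (Hcoh : Subgroup G → ℕ → Type*)
  [∀ K n, AddCommGroup (Hcoh K n)] [∀ K n, Module (ZMod p) (Hcoh K n)]
  (Hmap : ∀ {A B : Subgroup G}, ((A : Type _) →* B) → ∀ n : ℕ,
      Hcoh B n →ₗ[ZMod p] Hcoh A n)

/-- The stability condition for `g ∈ G` on a class `x ∈ H^n(K; F_p)`:
`res^K_{K^g ∩ K}(x) = g^*(res^K_{K ∩ gKg⁻¹}(x))`. -/
def IsStable (K : Subgroup G) (g : G) (n : ℕ) (x : Hcoh K n) : Prop :=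
  Hmap (Subgroup.inclusion (interSub_le g K)) n x = Hmap (conjHom g K) n x

variable (Gs : ℕ → Subgroup G) (hS : ∀ i, Gs 0 ≤ Gs i)

/-- The sets `R_i ⊆ H^*(S; F_p)` of Holt's iterated stable elements method for a tower
`S = G_0 ≤ G_1 ≤ ⋯`: `R_0 = H^*(S; F_p)`, and `R_{i+1}` consists of those elements of
`R_i` whose representative `y ∈ H^*(G_i; F_p)` (inductively, `R_i` is the image of the
injective restriction `res^{G_i}_S`) is stable with respect to all
`(G_i, G_i)`-double cosets in `G_{i+1}`. -/
def Rset (n : ℕ) : ℕ → Set (Hcoh (Gs 0) n)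
  | 0 => Set.univ
  | (i + 1) => { x ∈ Rset n i |
      ∀ y : Hcoh (Gs i) n, Hmap (Subgroup.inclusion (hS i)) n y = x →
        ∀ g ∈ Gs (i + 1), IsStable p Hcoh @Hmap (Gs i) g n y }

theorem Function.Injective.mem_range_comp_iff {α β γ : Type*} {f : β → γ} {g : α → β}
    (hf : Function.Injective f) {x : γ} :
    x ∈ Set.range (f ∘ g) ↔ x ∈ Set.range f ∧ ∀ y, f y = x → y ∈ Set.range g := by
  constructor
  · rintro ⟨z, rfl⟩
    exact ⟨⟨g z, rfl⟩, fun y hy => ⟨z, (hf hy).symm⟩⟩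
  · rintro ⟨⟨y, rfl⟩, hy⟩
    obtain ⟨z, rfl⟩ := hy y rfl
    exact ⟨z, rfl⟩

theorem Subgroup.coprime_relIndex_of_le {K M : Subgroup G} {p : ℕ} (h : K ≤ M)
    (hK : K.index.Coprime p) : (K.relIndex M).Coprime p :=
  hK.coprime_dvd_left (Subgroup.relIndex_dvd_index_of_le h)

section Restriction

variable {p Hcoh Hmap}

theorem mem_range_res_iff_of_le_of_le
    (Hmap_comp : ∀ {A B C : Subgroup G} (f : (A : Type _) →* B) (f' : (B : Type _) →* C)
      (n : ℕ), Hmap (f'.comp f) n = (Hmap f n).comp (Hmap f' n))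
    {K L M : Subgroup G} (hKL : K ≤ L) (hLM : L ≤ M) (n : ℕ)
    (hinj : Function.Injective (Hmap (Subgroup.inclusion hKL) n))
    (hstable : Set.range (Hmap (Subgroup.inclusion hLM) n)
      = { y : Hcoh L n | ∀ g ∈ M, IsStable p Hcoh @Hmap L g n y })
    (x : Hcoh K n) :
    x ∈ Set.range (Hmap (Subgroup.inclusion (hKL.trans hLM)) n)
      ↔ x ∈ Set.range (Hmap (Subgroup.inclusion hKL) n) ∧
        ∀ y, Hmap (Subgroup.inclusion hKL) n y = x →
          ∀ g ∈ M, IsStable p Hcoh @Hmap L g n y := by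
  have hfactor : Hmap (Subgroup.inclusion (hKL.trans hLM)) n
      = (Hmap (Subgroup.inclusion hKL) n).comp (Hmap (Subgroup.inclusion hLM) n) :=
    Hmap_comp (Subgroup.inclusion hKL) (Subgroup.inclusion hLM) n
  rw [hfactor, LinearMap.coe_comp, hinj.mem_range_comp_iff, hstable]
  rfl

variable {Gs hS}

theorem range_res_eq_Rset
    (Hmap_id : ∀ (A : Subgroup G) (n : ℕ), Hmap (MonoidHom.id A) n = LinearMap.id)
    (Hmap_comp : ∀ {A B C : Subgroup G} (f : (A : Type _) →* B) (f' : (B : Type _) →* C)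
      (n : ℕ), Hmap (f'.comp f) n = (Hmap f n).comp (Hmap f' n))
    (hmono : ∀ i, Gs i ≤ Gs (i + 1))
    (hinj : ∀ i n, Function.Injective (Hmap (Subgroup.inclusion (hS i)) n))
    (hstable : ∀ i n, Set.range (Hmap (Subgroup.inclusion (hmono i)) n)
      = { y : Hcoh (Gs i) n | ∀ g ∈ Gs (i + 1), IsStable p Hcoh @Hmap (Gs i) g n y })
    (n : ℕ) : ∀ i, Set.range (Hmap (Subgroup.inclusion (hS i)) n) = Rset p Hcoh @Hmap Gs hS n i
  | 0 => by
    change Set.range (Hmap (MonoidHom.id _) n) = Set.univ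
    rw [Hmap_id, LinearMap.id_coe, Set.range_id]
  | i + 1 => by
    ext x
    change _ ↔ x ∈ Rset p Hcoh @Hmap Gs hS n i ∧ _
    rw [← range_res_eq_Rset Hmap_id Hmap_comp hmono hinj hstable n i]
    exact mem_range_res_iff_of_le_of_le Hmap_comp (hS i) (hmono i) n (hinj i n) (hstable i n) x

end Restriction

theorem mem_range_res_iff_mem_Rset
    -- contravariant functoriality:
    (Hmap_id : ∀ (A : Subgroup G) (n : ℕ), Hmap (MonoidHom.id A) n = LinearMap.id)
    (Hmap_comp : ∀ {A B C : Subgroup G} (f : (A : Type _) →* B) (f' : (B : Type _) →* C)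
      (n : ℕ), Hmap (f'.comp f) n = (Hmap f n).comp (Hmap f' n))
    -- the Cartan–Eilenberg stable elements theorem: for `K ≤ M` of index coprime to
    -- `p`, restriction identifies `H^*(M; F_p)` with the stable elements in `H^*(K; F_p)`
    (stable_elements : ∀ (K M : Subgroup G) (h : K ≤ M),
      Nat.Coprime (K.relIndex M) p → ∀ n : ℕ,
        Set.range (Hmap (Subgroup.inclusion h) n)
          = { x : Hcoh K n | ∀ g ∈ M, IsStable p Hcoh @Hmap K g n x })
    -- injectivity of restriction to a subgroup of index coprime to `p`:
    (res_inj : ∀ (K M : Subgroup G) (h : K ≤ M), Nat.Coprime (K.relIndex M) p →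
      ∀ n : ℕ, Function.Injective (Hmap (Subgroup.inclusion h) n))
    -- the tower `S = G_0 ≤ G_1 ≤ ⋯ ≤ G_N = G`, with `S` a Sylow `p`-subgroup of `G`:
    (N : ℕ) (hmono : ∀ i, Gs i ≤ Gs (i + 1))
    (hScop : Nat.Coprime (Gs 0).index p) :
    (∀ i ≤ N, Nat.Coprime ((Gs 0).relIndex (Gs i)) p) ∧
      ∀ (n : ℕ) (x : Hcoh (Gs 0) n),
        x ∈ Set.range (Hmap (Subgroup.inclusion (hS N)) n)
          ↔ x ∈ Rset p Hcoh @Hmap Gs hS n N := by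
  have hcop : ∀ i, ((Gs 0).relIndex (Gs i)).Coprime p := fun i =>
    Subgroup.coprime_relIndex_of_le (hS i) hScop
  have hcop_step : ∀ i, ((Gs i).relIndex (Gs (i + 1))).Coprime p := fun i =>
    (hcop (i + 1)).coprime_dvd_left (Subgroup.relIndex_dvd_of_le_left _ (hS i))
  refine ⟨fun i _ => hcop i, fun n x => ?_⟩
  rw [range_res_eq_Rset Hmap_id Hmap_comp hmono
    (fun i n => res_inj _ _ (hS i) (hcop i) n)
    (fun i n => stable_elements _ _ (hmono i) (hcop_step i) n)]

end
end
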